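/- Every antisymmetric element of the Milnor ring J = k[x_1,…,x_n]/(x_1^{k−1},…,x_n^{k−1}) is divisible by the Vandermonde class w_n; equivalently, the antisymmetric part of J equals w_n · J^{S_n}. -/

import Mathlib

open MvPolynomial

noncomputable def milnorIdeal (K : Type) [Field K] (n k : ℕ) : Ideal (MvPolynomial (Fin n) K) :=
  Ideal.span (Set.range fun i : Fin n => (X i : MvPolynomial (Fin n) K) ^ (k - 1))

noncomputable abbrev MilnorRing (K : Type) [Field K] (n k : ℕ) :=
  MvPolynomial (Fin n) K ⧸ milnorIdeal K n k

noncomputable def permAct (K : Type) [Field K] (n k : ℕ) (σ : Equiv.Perm (Fin n)) :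
    MilnorRing K n k →ₐ[K] MilnorRing K n k :=
  Ideal.Quotient.liftₐ (milnorIdeal K n k)
    ((Ideal.Quotient.mkₐ K (milnorIdeal K n k)).comp (rename σ)) (by
      intro a ha
      simp only [AlgHom.comp_apply, Ideal.Quotient.mkₐ_eq_mk]
      rw [Ideal.Quotient.eq_zero_iff_mem]
      have hmap : (milnorIdeal K n k).map (rename (R := K) σ) ≤ milnorIdeal K n k := by
        rw [milnorIdeal, Ideal.map_span]
        apply Ideal.span_le.2
        rintro _ ⟨_, ⟨i, rfl⟩, rfl⟩
        simp only [map_pow, rename_X]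
        exact Ideal.subset_span ⟨σ i, rfl⟩
      exact hmap (Ideal.mem_map_of_mem _ ha))

noncomputable def vandermonde (K : Type) [Field K] (n : ℕ) : MvPolynomial (Fin n) K :=
  ∏ i : Fin n, ∏ j ∈ Finset.Ioi i, (X i - X j)

noncomputable def antisym (K : Type) [Field K] (n k : ℕ) : Submodule K (MilnorRing K n k) :=
  ⨅ σ : Equiv.Perm (Fin n),
    Module.End.eigenspace (permAct K n k σ).toLinearMap ((Equiv.Perm.sign σ : ℤ) : K)

noncomputable def invSubalg (K : Type) [Field K] (n k : ℕ) : Subalgebra K (MilnorRing K n k) where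
  carrier := {a | ∀ σ, permAct K n k σ a = a}
  mul_mem' := fun ha hb => fun σ => by rw [map_mul, ha σ, hb σ]
  add_mem' := fun ha hb => fun σ => by rw [map_add, ha σ, hb σ]
  one_mem' := fun σ => map_one _
  zero_mem' := fun σ => map_zero _
  algebraMap_mem' := fun r σ => (permAct K n k σ).commutes r

/-! An antisymmetric class in `J` lifts to a polynomial whose antisymmetrization `A` is an
antisymmetric polynomial with image `n! • p`. Since `A` changes sign under the transposition
`(i j)`, it vanishes under `x_j ↦ x_i` (here `2 ≠ 0` is used) and so is divisible by each prime
`x_i - x_j`; these are pairwise non-associated, so the Vandermonde polynomial divides `A`. The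
quotient is symmetric, and its image divided by `n!` is the required invariant. -/

theorem Finset.prod_dvd_of_prime_of_pairwise_not_associated {ι M₀ : Type*}
    [CommMonoidWithZero M₀] [IsCancelMulZero M₀] {s : Finset ι} {p : ι → M₀} {a : M₀}
    (hp : ∀ i ∈ s, Prime (p i)) (hs : (s : Set ι).Pairwise fun i j => ¬Associated (p i) (p j))
    (ha : ∀ i ∈ s, p i ∣ a) : ∏ i ∈ s, p i ∣ a := by
  classical
  have hinj : Set.InjOn (Associates.mk ∘ p) s := fun i hi j hj hij => by
    by_contra hne
    exact hs hi hj hne (Associates.mk_eq_mk_iff_associated.mp hij)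
  have := Finset.prod_primes_dvd (Associates.mk a) (s := s.image (Associates.mk ∘ p))
    (by simpa using fun i hi => Associates.prime_mk.mpr (hp i hi))
    (by simpa using fun i hi => Associates.mk_dvd_mk.mpr (ha i hi))
  rwa [Finset.prod_image hinj, Function.comp_def, Associates.finsetProd_mk,
    Associates.mk_dvd_mk] at this

namespace MvPolynomial

variable {σ R : Type*} [CommRing R]

theorem X_sub_X_dvd_iff [DecidableEq σ] {i j : σ} {p : MvPolynomial σ R} :
    X i - X j ∣ p ↔ rename (Function.update id j i) p = 0 := by
  constructor
  · rintro ⟨q, rfl⟩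
    simp [Function.update_apply]
  · intro h
    have hmk : (Ideal.Quotient.mkₐ R (Ideal.span {X i - X j})).comp
        (rename (Function.update id j i)) =
          Ideal.Quotient.mkₐ R (Ideal.span {(X i - X j : MvPolynomial σ R)}) := by
      refine algHom_ext fun l => ?_
      rcases eq_or_ne l j with rfl | hl
      · simp [Ideal.Quotient.mk_eq_mk_iff_sub_mem]
      · simp [Function.update_of_ne hl, rename_X]
    rw [← Ideal.mem_span_singleton, ← sub_zero p, ← h,
      ← Ideal.Quotient.mk_eq_mk_iff_sub_mem]
    exact (AlgHom.congr_fun hmk p).symm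

theorem X_sub_X_dvd_of_rename_swap_eq_neg [IsDomain R] [CharZero R] [DecidableEq σ] {i j : σ}
    {p : MvPolynomial σ R} (hp : rename (Equiv.swap i j) p = -p) : X i - X j ∣ p := by
  have hcomp : Function.update id j i ∘ Equiv.swap i j = Function.update id j i := by
    ext l
    rcases eq_or_ne l i with rfl | hi
    · simp [Function.update_apply]
    rcases eq_or_ne l j with rfl | hj
    · simp [Function.update_apply]
    · simp [Equiv.swap_apply_of_ne_of_ne hi hj, Function.update_of_ne hj]
  rw [X_sub_X_dvd_iff, ← CharZero.neg_eq_self_iff, ← map_neg, ← hp, rename_rename, hcomp]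

theorem eq_of_X_sub_X_dvd_X_sub_X [Nontrivial R] [LinearOrder σ] {i j k l : σ} (hij : i < j)
    (hkl : k < l) (h : X i - X j ∣ (X k - X l : MvPolynomial σ R)) : i = k ∧ j = l := by
  classical
  rw [X_sub_X_dvd_iff] at h
  simp only [map_sub, rename_X, sub_eq_zero, X_inj, Function.update_apply, id] at h
  split_ifs at h <;> grind

theorem prime_X_sub_X [IsDomain R] [DecidableEq σ] {i j : σ} (hij : i ≠ j) :
    Prime (X i - X j : MvPolynomial σ R) := by
  let φ : MvPolynomial σ R →ₐ[R] MvPolynomial σ R := aeval (Function.update X j (X i - X j))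
  have hφ : φ.comp φ = AlgHom.id R _ := algHom_ext fun l => by
    rcases eq_or_ne l j with rfl | hl
    · simp [φ, hij]
    · simp [φ, hl]
  simpa [φ] using
    (MulEquiv.prime_iff (AlgEquiv.ofAlgHom φ φ hφ hφ)).mpr (X_prime (R := R) (i := j))

noncomputable def antisymmetrize [Fintype σ] [DecidableEq σ] (p : MvPolynomial σ R) :
    MvPolynomial σ R :=
  ∑ τ : Equiv.Perm σ, Equiv.Perm.sign τ • rename τ p

theorem rename_antisymmetrize [Fintype σ] [DecidableEq σ] (τ : Equiv.Perm σ)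
    (p : MvPolynomial σ R) :
    rename τ (antisymmetrize p) = Equiv.Perm.sign τ • antisymmetrize p := by
  rw [antisymmetrize, map_sum, Finset.smul_sum]
  refine Fintype.sum_equiv (Equiv.mulLeft τ) _ _ fun υ => ?_
  rw [Equiv.coe_mulLeft, map_zsmul_unit, rename_rename, Equiv.Perm.sign_mul, smul_smul,
    ← mul_assoc, Int.units_mul_self, one_mul, Equiv.Perm.coe_mul]

end MvPolynomial

open scoped Nat

variable {K : Type} [Field K] {n : ℕ}

theorem vandermonde_eq_neg_one_pow_mul_det :
    vandermonde K n = (-1) ^ (∑ i : Fin n, (Finset.Ioi i).card) *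
      (Matrix.vandermonde (X : Fin n → MvPolynomial (Fin n) K)).det := by
  rw [Matrix.det_vandermonde, ← Finset.prod_pow_eq_pow_sum, ← Finset.prod_mul_distrib,
    vandermonde]
  refine Finset.prod_congr rfl fun i _ => ?_
  rw [← Finset.prod_const, ← Finset.prod_mul_distrib]
  exact Finset.prod_congr rfl fun j _ => by ring

theorem rename_vandermonde (τ : Equiv.Perm (Fin n)) :
    rename τ (vandermonde K n) = Equiv.Perm.sign τ • vandermonde K n := by
  have hdet : rename τ (Matrix.vandermonde (X : Fin n → MvPolynomial (Fin n) K)).det =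
      Equiv.Perm.sign τ • (Matrix.vandermonde X).det := by
    rw [← AlgHom.coe_toRingHom, RingHom.map_det, Units.smul_def, zsmul_eq_mul,
      ← Matrix.det_permute]
    congr 1
    ext a b
    simp [Matrix.vandermonde_apply]
  rw [vandermonde_eq_neg_one_pow_mul_det, map_mul, hdet, mul_smul_comm, map_pow, map_neg, map_one]

theorem vandermonde_dvd_of_forall_X_sub_X_dvd {p : MvPolynomial (Fin n) K}
    (h : ∀ i j : Fin n, i < j → X i - X j ∣ p) : vandermonde K n ∣ p := by
  rw [vandermonde, Finset.prod_sigma']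
  refine Finset.prod_dvd_of_prime_of_pairwise_not_associated ?_ ?_ ?_
  · rintro ⟨i, j⟩ hij
    exact prime_X_sub_X (by simpa using hij : i < j).ne
  · rintro ⟨i, j⟩ hij ⟨k, l⟩ hkl hne hassoc
    obtain ⟨rfl, rfl⟩ :=
      eq_of_X_sub_X_dvd_X_sub_X (by simpa using hij) (by simpa using hkl) hassoc.dvd
    exact hne rfl
  · rintro ⟨i, j⟩ hij
    exact h i j (by simpa using hij)

theorem vandermonde_ne_zero : vandermonde K n ≠ 0 :=
  Finset.prod_ne_zero_iff.mpr fun _ _ => Finset.prod_ne_zero_iff.mpr fun _ hj =>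
    (prime_X_sub_X (Finset.mem_Ioi.mp hj).ne).ne_zero

theorem exists_isSymmetric_eq_vandermonde_mul [CharZero K] {p : MvPolynomial (Fin n) K}
    (hp : ∀ τ : Equiv.Perm (Fin n), rename τ p = Equiv.Perm.sign τ • p) :
    ∃ q : MvPolynomial (Fin n) K, q.IsSymmetric ∧ p = vandermonde K n * q := by
  obtain ⟨q, rfl⟩ := vandermonde_dvd_of_forall_X_sub_X_dvd fun i j hij =>
    X_sub_X_dvd_of_rename_swap_eq_neg <| by
      rw [hp, Equiv.Perm.sign_swap hij.ne, Units.neg_smul, one_smul]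
  refine ⟨q, fun τ => ?_, rfl⟩
  have := hp τ
  rw [map_mul, rename_vandermonde, smul_mul_assoc, smul_left_cancel_iff] at this
  exact mul_left_cancel₀ vandermonde_ne_zero this

variable {k : ℕ}

@[simp]
theorem permAct_mk (τ : Equiv.Perm (Fin n)) (p : MvPolynomial (Fin n) K) :
    permAct K n k τ (Ideal.Quotient.mk _ p) = Ideal.Quotient.mk _ (rename τ p) :=
  rfl

theorem mem_antisym_iff {a : MilnorRing K n k} :
    a ∈ antisym K n k ↔ ∀ τ, permAct K n k τ a = Equiv.Perm.sign τ • a := by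
  simp only [antisym, Submodule.mem_iInf, Module.End.mem_eigenspace_iff,
    AlgHom.toLinearMap_apply, Units.smul_def, Int.cast_smul_eq_zsmul]

theorem mk_mem_invSubalg {p : MvPolynomial (Fin n) K} (hp : p.IsSymmetric) :
    Ideal.Quotient.mk (milnorIdeal K n k) p ∈ invSubalg K n k := fun τ => by
  rw [permAct_mk, hp τ]

theorem mk_vandermonde_mul_mem_antisym {a : MilnorRing K n k} (ha : a ∈ invSubalg K n k) :
    Ideal.Quotient.mk _ (vandermonde K n) * a ∈ antisym K n k :=
  mem_antisym_iff.mpr fun τ => by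
    rw [map_mul, ha τ, permAct_mk, rename_vandermonde, map_zsmul_unit, smul_mul_assoc]

theorem mk_antisymmetrize {p : MvPolynomial (Fin n) K}
    (hp : Ideal.Quotient.mk (milnorIdeal K n k) p ∈ antisym K n k) :
    Ideal.Quotient.mk (milnorIdeal K n k) (antisymmetrize p) = n ! • Ideal.Quotient.mk _ p := by
  have hterm (τ : Equiv.Perm (Fin n)) :
      Ideal.Quotient.mk (milnorIdeal K n k) (Equiv.Perm.sign τ • rename τ p) =
        Ideal.Quotient.mk _ p := by
    rw [map_zsmul_unit, ← permAct_mk, mem_antisym_iff.mp hp, smul_smul, Int.units_mul_self,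
      one_smul]
  simp only [antisymmetrize, map_sum, hterm, Finset.sum_const, Finset.card_univ,
    Fintype.card_perm, Fintype.card_fin]

theorem antisym_eq_vandermonde_mul_invariants_general (K : Type) [Field K] [CharZero K]
    (n k : ℕ) :
    antisym K n k =
      Submodule.map
        (LinearMap.mulLeft K (Ideal.Quotient.mk (milnorIdeal K n k) (vandermonde K n)))
        (Subalgebra.toSubmodule (invSubalg K n k)) := by
  refine le_antisymm (fun a ha => ?_) ?_
  · obtain ⟨p, rfl⟩ := Ideal.Quotient.mk_surjective a
    obtain ⟨q, hq, hpq⟩ :=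
      exists_isSymmetric_eq_vandermonde_mul fun τ => rename_antisymmetrize τ p
    refine ⟨Ideal.Quotient.mk _ ((n ! : K)⁻¹ • q), mk_mem_invSubalg (hq.smul _), ?_⟩
    have hn : (n ! : K) ≠ 0 := Nat.cast_ne_zero.mpr n.factorial_ne_zero
    calc Ideal.Quotient.mk _ (vandermonde K n) * Ideal.Quotient.mk _ ((n ! : K)⁻¹ • q)
        = (n ! : K)⁻¹ • Ideal.Quotient.mk (milnorIdeal K n k) (antisymmetrize p) := by
          rw [hpq, ← map_mul, mul_smul_comm, ← Ideal.Quotient.mkₐ_eq_mk K, map_smul]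
      _ = Ideal.Quotient.mk _ p := by
          rw [mk_antisymmetrize ha, ← Nat.cast_smul_eq_nsmul K, inv_smul_smul₀ hn]
  · rintro _ ⟨a, ha, rfl⟩
    exact mk_vandermonde_mul_mem_antisym ha

/-- For `k > n`, the antisymmetric part of the Milnor ring equals `w_n · J^{S_n}`:
every antisymmetric element is divisible by the Vandermonde class. -/
theorem antisym_eq_vandermonde_mul_invariants (K : Type) [Field K] [CharZero K]
    (n k : ℕ) (hk : n < k) :
    antisym K n k =
      Submodule.map
        (LinearMap.mulLeft K (Ideal.Quotient.mk (milnorIdeal K n k) (vandermonde K n)))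
        (Subalgebra.toSubmodule (invSubalg K n k)) :=
  antisym_eq_vandermonde_mul_invariants_general K n k
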